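/- arXiv:2209.07807 — 2 statements merged into one kernel-verified Lean document; each statement's English description precedes it below -/
import Mathlib

section
/- Let d ≥ 1, let f : ℝᵈ → ℝ be differentiable with gradient ∇f Lipschitz continuous with constant L₂, let μ > 0, and define f_μ(a) = E_{v∼U_b}[f(a + μ·v)]. Then f_μ is differentiable, its gradient satisfies ∇f_μ(a) = E_{v∼U_b}[∇f(a + μ·v)] for every a ∈ ℝᵈ, and ∇f_μ is Lipschitz continuous with the same constant L₂. -/
open MeasureTheory

/-- The uniform probability measure on the closed unit Euclidean ball in `ℝᵈ`:
Lebesgue measure restricted to the ball, normalized to total mass one. -/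
noncomputable def ballUniform (d : ℕ) : Measure (EuclideanSpace ℝ (Fin d)) :=
  (volume (Metric.closedBall (0 : EuclideanSpace ℝ (Fin d)) 1))⁻¹ •
    volume.restrict (Metric.closedBall (0 : EuclideanSpace ℝ (Fin d)) 1)

/-!
Differentiate under the integral sign: on the unit ball around `a₀`, the Lipschitz bound on `∇f`
dominates `‖∇f(a + μ v)‖` by the integrable function `‖∇f(a₀ + μ v)‖ + L₂`. The gradient of
`f_μ` is therefore an average of translates of `∇f`, and averaging translates of an
`L₂`-Lipschitz map against a probability measure keeps it `L₂`-Lipschitz.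
-/

section TranslateAverage

variable {α E F : Type*} [MeasurableSpace α] {ν : Measure α}
  [NormedAddCommGroup E] [NormedAddCommGroup F] [NormedSpace ℝ F]
  {φ : α → E} {K : NNReal}

theorem LipschitzWith.integral_comp_add [IsProbabilityMeasure ν] {g : E → F}
    (hg : LipschitzWith K g) (hint : ∀ x, Integrable (fun v => g (x + φ v)) ν) :
    LipschitzWith K (fun x => ∫ v, g (x + φ v) ∂ν) := by
  refine LipschitzWith.of_dist_le_mul fun x y => ?_
  rw [dist_eq_norm, ← integral_sub (hint x) (hint y)]
  have hle : ∀ v, ‖g (x + φ v) - g (y + φ v)‖ ≤ K * dist x y := fun v => by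
    rw [← dist_eq_norm, ← dist_add_right x y (φ v)]
    exact hg.dist_le_mul _ _
  simpa using norm_integral_le_of_norm_le_const (μ := ν) (Filter.Eventually.of_forall hle)

theorem hasFDerivAt_integral_comp_add [NormedSpace ℝ E] [IsFiniteMeasure ν] [CompleteSpace F]
    {f : E → F} (hf : Differentiable ℝ f) (hf' : LipschitzWith K (fderiv ℝ f))
    (hφ : AEStronglyMeasurable φ ν) {x₀ : E} (hint : Integrable (fun v => f (x₀ + φ v)) ν)
    (hint' : Integrable (fun v => fderiv ℝ f (x₀ + φ v)) ν) :
    HasFDerivAt (fun x => ∫ v, f (x + φ v) ∂ν) (∫ v, fderiv ℝ f (x₀ + φ v) ∂ν) x₀ := by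
  have hbound : ∀ v, ∀ x ∈ Metric.ball x₀ 1,
      ‖fderiv ℝ f (x + φ v)‖ ≤ ‖fderiv ℝ f (x₀ + φ v)‖ + K := fun v x hx => by
    have hx' : dist (x + φ v) (x₀ + φ v) ≤ 1 := by
      simpa only [dist_add_right] using (Metric.mem_ball.1 hx).le
    have hdist := hf'.dist_le_mul_of_le hx'
    rw [dist_eq_norm, mul_one] at hdist
    linarith [norm_le_insert' (fderiv ℝ f (x + φ v)) (fderiv ℝ f (x₀ + φ v))]
  exact hasFDerivAt_integral_of_dominated_of_fderiv_le
    (F' := fun x v => fderiv ℝ f (x + φ v)) (Metric.ball_mem_nhds x₀ one_pos)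
    (.of_forall fun x =>
      hf.continuous.comp_aestronglyMeasurable (aestronglyMeasurable_const.add hφ))
    hint hint'.aestronglyMeasurable (.of_forall hbound) (hint'.norm.add (integrable_const _))
    (.of_forall fun v x _ => (hf _).hasFDerivAt.comp x ((hasFDerivAt_id x).add_const (φ v)))

end TranslateAverage

theorem hasGradientAt_integral_comp_add {α E : Type*} [MeasurableSpace α] {ν : Measure α}
    [IsFiniteMeasure ν] [NormedAddCommGroup E] [InnerProductSpace ℝ E] [CompleteSpace E]
    {φ : α → E} {K : NNReal} {f : E → ℝ} (hf : Differentiable ℝ f)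
    (hf' : LipschitzWith K (gradient f)) (hφ : AEStronglyMeasurable φ ν) {x₀ : E}
    (hint : Integrable (fun v => f (x₀ + φ v)) ν)
    (hint' : Integrable (fun v => gradient f (x₀ + φ v)) ν) :
    HasGradientAt (fun x => ∫ v, f (x + φ v) ∂ν) (∫ v, gradient f (x₀ + φ v) ∂ν) x₀ := by
  have hdual : ∀ y, InnerProductSpace.toDual ℝ E (gradient f y) = fderiv ℝ f y := fun y =>
    (InnerProductSpace.toDual ℝ E).apply_symm_apply _
  have hintegral : InnerProductSpace.toDual ℝ E (∫ v, gradient f (x₀ + φ v) ∂ν) =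
      ∫ v, fderiv ℝ f (x₀ + φ v) ∂ν := by
    simp only [← hdual]
    exact ((InnerProductSpace.toDual ℝ E).toLinearIsometry.integral_comp_comm _).symm
  rw [hasGradientAt_iff_hasFDerivAt, hintegral]
  refine hasFDerivAt_integral_comp_add hf (K := K) ?_ hφ hint ?_
  · simpa [Function.comp_def, hdual] using (InnerProductSpace.toDual ℝ E).lipschitz.comp hf'
  · simpa only [hdual] using (InnerProductSpace.toDual ℝ E).integrable_comp_iff.2 hint'

instance (d : ℕ) : IsProbabilityMeasure (ballUniform d) := by
  have hpos := Metric.measure_closedBall_pos volume (0 : EuclideanSpace ℝ (Fin d)) one_pos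
  constructor
  rw [ballUniform, Measure.smul_apply, Measure.restrict_apply MeasurableSet.univ,
    Set.univ_inter, smul_eq_mul]
  exact ENNReal.inv_mul_cancel hpos.ne' measure_closedBall_lt_top.ne

theorem Continuous.integrable_ballUniform {d : ℕ} {F : Type*} [NormedAddCommGroup F]
    {g : EuclideanSpace ℝ (Fin d) → F} (hg : Continuous g) : Integrable g (ballUniform d) :=
  (hg.continuousOn.integrableOn_compact (isCompact_closedBall _ _)).smul_measure
    (ENNReal.inv_ne_top.2 (Metric.measure_closedBall_pos volume _ one_pos).ne')

theorem ballSmoothing_gradient_lipschitz_general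
    (d : ℕ) (f : EuclideanSpace ℝ (Fin d) → ℝ)
    (hdiff : Differentiable ℝ f)
    (L₂ : NNReal) (hgrad : LipschitzWith L₂ (gradient f))
    (μ : ℝ)
    (fμ : EuclideanSpace ℝ (Fin d) → ℝ)
    (hfμ : ∀ a, fμ a = ∫ v, f (a + μ • v) ∂(ballUniform d)) :
    Differentiable ℝ fμ ∧
      (∀ a, gradient fμ a = ∫ v, gradient f (a + μ • v) ∂(ballUniform d)) ∧
      LipschitzWith L₂ (gradient fμ) := by
  obtain rfl : fμ = fun a => ∫ v, f (a + μ • v) ∂(ballUniform d) := funext hfμ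
  have hint : ∀ {F : Type} [NormedAddCommGroup F]
      {g : EuclideanSpace ℝ (Fin d) → F}, Continuous g → ∀ a,
      Integrable (fun v => g (a + μ • v)) (ballUniform d) := fun hg a =>
    (hg.comp (by fun_prop)).integrable_ballUniform
  have hsmooth : ∀ a, HasGradientAt (fun a => ∫ v, f (a + μ • v) ∂(ballUniform d))
      (∫ v, gradient f (a + μ • v) ∂(ballUniform d)) a := fun a =>
    hasGradientAt_integral_comp_add hdiff hgrad (continuous_const_smul μ).aestronglyMeasurable
      (hint hdiff.continuous a) (hint hgrad.continuous a)
  have hgradμ := fun a => (hsmooth a).gradient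
  refine ⟨fun a => (hsmooth a).differentiableAt, hgradμ, ?_⟩
  rw [funext hgradμ]
  exact hgrad.integral_comp_add (hint hgrad.continuous)

/-- Lemma 2, part 2: if `f : ℝᵈ → ℝ` is differentiable with `L₂`-Lipschitz gradient
and `μ > 0`, then the ball-smoothing `f_μ(a) = E_{v ∼ U_b}[f(a + μ v)]` is
differentiable, its gradient is `∇f_μ(a) = E_{v ∼ U_b}[∇f(a + μ v)]`, and
`∇f_μ` is `L₂`-Lipschitz. -/
theorem ballSmoothing_gradient_lipschitz
    (d : ℕ) (hd : 1 ≤ d) (f : EuclideanSpace ℝ (Fin d) → ℝ)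
    (hdiff : Differentiable ℝ f)
    (L₂ : NNReal) (hgrad : LipschitzWith L₂ (gradient f))
    (μ : ℝ) (hμ : 0 < μ)
    (fμ : EuclideanSpace ℝ (Fin d) → ℝ)
    (hfμ : ∀ a, fμ a = ∫ v, f (a + μ • v) ∂(ballUniform d)) :
    Differentiable ℝ fμ ∧
      (∀ a, gradient fμ a = ∫ v, gradient f (a + μ • v) ∂(ballUniform d)) ∧
      LipschitzWith L₂ (gradient fμ) :=
  ballSmoothing_gradient_lipschitz_general d f hdiff L₂ hgrad μ fμ hfμ
end

section
/- Let d ≥ 1, let f : ℝᵈ → ℝ be Lipschitz continuous, let μ > 0, and define f_μ(a) = E_{v∼U_b}[f(a + μ·v)]. Then f_μ is differentiable at every a ∈ ℝᵈ and its gradient is given by the sphere integral ∇f_μ(a) = (d/μ) · ∫_{S^{d−1}} f(a + μ·u) · u dσ(u), where σ is the uniform probability measure on the unit Euclidean sphere S^{d−1} ⊂ ℝᵈ. -/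
open MeasureTheory

/-- The uniform (rotation-invariant) probability measure on the unit Euclidean
sphere `S^{d-1} ⊂ ℝᵈ`: the surface measure induced by Lebesgue measure,
normalized to total mass one. -/
noncomputable def sphereUniform (d : ℕ) :
    Measure (Metric.sphere (0 : EuclideanSpace ℝ (Fin d)) 1) :=
  ((volume : Measure (EuclideanSpace ℝ (Fin d))).toSphere Set.univ)⁻¹ •
    (volume : Measure (EuclideanSpace ℝ (Fin d))).toSphere

/-!
Write `φ y = f (a + μ • y)`, so that `f_μ (a + μ • η)` is the mean of `φ` over `closedBall η 1`.
In polar coordinates about `0`, this ball is `{r • u : 0 < r ≤ ρ(η, u)}` with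
`ρ(η, u) = ⟪u, η⟫ + √(1 - ‖η‖² + ⟪u, η⟫²) = 1 + ⟪u, η⟫ + O(‖η‖²)`, hence
`∫_{B(η,1)} φ = ∫_{S} ∫_0^{ρ(η,u)} r^(d-1) φ(r u) dr dσ(u)`.
By the fundamental theorem of calculus in `r`, made uniform in `u` by uniform continuity on a
compact set, the first-order change at `η = 0` is `∫_S φ(u) ⟪u, η⟫ dσ(u)`. Dividing by the
volume of the ball, and using `σ(S) = d · vol(B)`, gives the factor `d / μ`.
-/

open Set Metric
open scoped RealInnerProductSpace Topology

lemma integral_volumeIoiPow {G : Type*} [NormedAddCommGroup G] [NormedSpace ℝ G] (n : ℕ)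
    (g : ℝ → G) :
    ∫ r : Ioi (0 : ℝ), g r ∂(Measure.volumeIoiPow n) = ∫ r in Ioi (0 : ℝ), r ^ n • g r := by
  rw [Measure.volumeIoiPow, integral_withDensity_eq_integral_toReal_smul (by fun_prop)
    (.of_forall fun _ ↦ ENNReal.ofReal_lt_top),
    integral_subtype_comap measurableSet_Ioi fun r ↦ (ENNReal.ofReal (r ^ n)).toReal • g r]
  refine setIntegral_congr_fun measurableSet_Ioi fun r hr ↦ ?_
  rw [ENNReal.toReal_ofReal (pow_nonneg (le_of_lt hr) n)]

section Polar

variable {E G : Type*} [NormedAddCommGroup E] [NormedSpace ℝ E] [FiniteDimensional ℝ E]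
  [MeasurableSpace E] [BorelSpace E] [NormedAddCommGroup G] (μ : Measure E)
  [μ.IsAddHaarMeasure]

lemma integral_eq_integral_toSphere_prod [Nontrivial E] [NormedSpace ℝ G] (F : E → G) :
    ∫ x, F x ∂μ = ∫ p : sphere (0 : E) 1 × Ioi (0 : ℝ), F (p.2.1 • p.1.1)
      ∂(μ.toSphere.prod (Measure.volumeIoiPow (Module.finrank ℝ E - 1))) := by
  calc ∫ x, F x ∂μ = ∫ x : ({0}ᶜ : Set E), F x ∂(μ.comap (↑)) := by
        rw [integral_subtype_comap (measurableSet_singleton _).compl, restrict_compl_singleton]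
    _ = _ := by
        rw [← μ.measurePreserving_homeomorphUnitSphereProd.integral_comp
          (Homeomorph.measurableEmbedding _)]
        congr with x
        simp [smul_inv_smul₀ (norm_ne_zero_iff.2 x.2)]

lemma Integrable.comp_smul_toSphere_prod {F : E → G} (hF : Integrable F μ) :
    Integrable (fun p : sphere (0 : E) 1 × Ioi (0 : ℝ) ↦ F (p.2.1 • p.1.1))
      (μ.toSphere.prod (Measure.volumeIoiPow (Module.finrank ℝ E - 1))) := by
  rw [← μ.measurePreserving_homeomorphUnitSphereProd.integrable_comp_emb
    (Homeomorph.measurableEmbedding _)]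
  convert (integrableOn_iff_comap_subtypeVal (measurableSet_singleton 0).compl).1
    hF.integrableOn using 1
  ext x
  simp [smul_inv_smul₀ (norm_ne_zero_iff.2 x.2)]

end Polar

section BallRadius

variable {E : Type*} [NormedAddCommGroup E] [InnerProductSpace ℝ E]

/-- For a unit vector `u` and `‖η‖ < 1`, the positive root `r` of `‖r • u - η‖ = 1`: the ray
through `u` leaves `closedBall η 1` at distance `ballRadius η u` from the origin. -/
noncomputable def ballRadius (η u : E) : ℝ := ⟪u, η⟫ + √(1 - ‖η‖ ^ 2 + ⟪u, η⟫ ^ 2)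

@[simp] lemma ballRadius_zero (u : E) : ballRadius 0 u = 1 := by simp [ballRadius]

variable {η u : E}

private lemma abs_inner_lt_sqrt (hη : ‖η‖ < 1) :
    |⟪u, η⟫| < √(1 - ‖η‖ ^ 2 + ⟪u, η⟫ ^ 2) := by
  rw [← Real.sqrt_sq_eq_abs]
  exact Real.sqrt_lt_sqrt (sq_nonneg _) (by nlinarith [norm_nonneg η])

lemma ballRadius_pos (hη : ‖η‖ < 1) : 0 < ballRadius η u := by
  have := abs_inner_lt_sqrt (u := u) hη
  rw [ballRadius]
  linarith [neg_abs_le ⟪u, η⟫]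

lemma norm_smul_sub_le_one_iff_le_ballRadius (hη : ‖η‖ < 1) (hu : ‖u‖ = 1) {r : ℝ}
    (hr : 0 < r) : ‖r • u - η‖ ≤ 1 ↔ r ≤ ballRadius η u := by
  have hbs := abs_inner_lt_sqrt (u := u) hη
  set b := ⟪u, η⟫
  have hs : √(1 - ‖η‖ ^ 2 + b ^ 2) ^ 2 = 1 - ‖η‖ ^ 2 + b ^ 2 :=
    Real.sq_sqrt (by nlinarith [norm_nonneg η, sq_nonneg b])
  rw [ballRadius, ← sq_le_one_iff₀ (norm_nonneg _), norm_sub_sq_real, norm_smul,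
    real_inner_smul_left, Real.norm_of_nonneg hr.le, hu]
  constructor <;> intro h <;> nlinarith [neg_abs_le b, le_abs_self b]

lemma abs_ballRadius_sub_one_sub_inner_le (hη : ‖η‖ ≤ 1) (hu : ‖u‖ = 1) :
    |ballRadius η u - 1 - ⟪u, η⟫| ≤ ‖η‖ ^ 2 := by
  set b := ⟪u, η⟫
  have hb : |b| ≤ ‖η‖ := by simpa [hu] using abs_real_inner_le_norm u η
  have hb2 : b ^ 2 ≤ ‖η‖ ^ 2 := sq_le_sq.2 (by simpa using hb)
  have hs := Real.sq_sqrt (by nlinarith [norm_nonneg η] : 0 ≤ 1 - ‖η‖ ^ 2 + b ^ 2)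
  have hs0 := Real.sqrt_nonneg (1 - ‖η‖ ^ 2 + b ^ 2)
  rw [ballRadius, add_sub_assoc, add_sub_cancel_left, abs_le]
  constructor <;> nlinarith

lemma abs_ballRadius_sub_one_le (hη : ‖η‖ ≤ 1) (hu : ‖u‖ = 1) :
    |ballRadius η u - 1| ≤ 2 * ‖η‖ := by
  have hb : |⟪u, η⟫| ≤ ‖η‖ := by simpa [hu] using abs_real_inner_le_norm u η
  have := abs_sub_abs_le_abs_sub (ballRadius η u - 1) ⟪u, η⟫
  nlinarith [abs_ballRadius_sub_one_sub_inner_le hη hu, norm_nonneg η]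

lemma integral_indicator_closedBall_smul {φ : E → ℝ} (hη : ‖η‖ < 1) (hu : ‖u‖ = 1) (n : ℕ) :
    ∫ r : Ioi (0 : ℝ), (closedBall η 1).indicator φ (r.1 • u) ∂(Measure.volumeIoiPow n) =
      ∫ r in (0 : ℝ)..ballRadius η u, r ^ n * φ (r • u) := by
  have hmem (r : ℝ) (hr : r ∈ Ioi 0) : r • u ∈ closedBall η 1 ↔ r ∈ Ioc 0 (ballRadius η u) := by
    rw [mem_closedBall, dist_eq_norm, norm_smul_sub_le_one_iff_le_ballRadius hη hu hr]
    exact (and_iff_right hr).symm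
  rw [integral_volumeIoiPow n fun r ↦ (closedBall η 1).indicator φ (r • u),
    intervalIntegral.integral_of_le (ballRadius_pos hη).le,
    ← inter_eq_self_of_subset_right Ioc_subset_Ioi_self, ← setIntegral_indicator measurableSet_Ioc]
  refine setIntegral_congr_fun measurableSet_Ioi fun r hr ↦ ?_
  simp only [indicator, hmem r hr, smul_eq_mul]
  split_ifs <;> simp

end BallRadius

section BallPolar

variable {E : Type*} [NormedAddCommGroup E] [InnerProductSpace ℝ E] [FiniteDimensional ℝ E]
  [MeasurableSpace E] [BorelSpace E] (μ : Measure E) [μ.IsAddHaarMeasure] {η : E} {φ : E → ℝ}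

lemma setIntegral_closedBall_eq_integral_toSphere [Nontrivial E] (hη : ‖η‖ < 1)
    (hφ : IntegrableOn φ (closedBall η 1) μ) :
    ∫ x in closedBall η 1, φ x ∂μ = ∫ u : sphere (0 : E) 1,
      (∫ r in (0 : ℝ)..ballRadius η u, r ^ (Module.finrank ℝ E - 1) * φ (r • u)) ∂μ.toSphere := by
  rw [← integral_indicator measurableSet_closedBall, integral_eq_integral_toSphere_prod,
    integral_prod _ (Integrable.comp_smul_toSphere_prod μ
      (hφ.integrable_indicator measurableSet_closedBall))]
  congr with u
  exact integral_indicator_closedBall_smul hη (norm_eq_of_mem_sphere u) _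

lemma integrable_toSphere_intervalIntegral_ballRadius (hη : ‖η‖ < 1)
    (hφ : IntegrableOn φ (closedBall η 1) μ) :
    Integrable (fun u : sphere (0 : E) 1 ↦
      ∫ r in (0 : ℝ)..ballRadius η u, r ^ (Module.finrank ℝ E - 1) * φ (r • u)) μ.toSphere :=
  (Integrable.comp_smul_toSphere_prod μ
      (hφ.integrable_indicator measurableSet_closedBall)).integral_prod_left.congr
    (.of_forall fun u ↦ integral_indicator_closedBall_smul hη (norm_eq_of_mem_sphere u) _)

end BallPolar

lemma abs_intervalIntegral_sub_sub_mul_le {ψ : ℝ → ℝ} (hψ : Continuous ψ) {a b ε : ℝ}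
    (h : ∀ r ∈ uIcc a b, |ψ r - ψ a| ≤ ε) :
    |(∫ r in (0 : ℝ)..b, ψ r) - (∫ r in (0 : ℝ)..a, ψ r) - ψ a * (b - a)| ≤ ε * |b - a| := by
  have hconst : ψ a * (b - a) = ∫ _ in a..b, ψ a := by simp [mul_comm]
  rw [intervalIntegral.integral_interval_sub_left (hψ.intervalIntegrable _ _)
    (hψ.intervalIntegrable _ _), hconst,
    ← intervalIntegral.integral_sub (hψ.intervalIntegrable _ _) intervalIntegrable_const]
  exact intervalIntegral.norm_integral_le_of_norm_le_const (f := fun r ↦ ψ r - ψ a)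
    fun r hr ↦ h r (uIoc_subset_uIcc hr)

section Gradient

variable {H : Type*} [NormedAddCommGroup H] [InnerProductSpace ℝ H] [CompleteSpace H]

lemma hasGradientAt_integral_of_uniform_remainder {α : Type*} [MeasurableSpace α]
    {ν : Measure α} [IsFiniteMeasure ν] {F : H → α → ℝ} {G : α → H} {x₀ : H}
    (hF : ∀ᶠ x in 𝓝 x₀, Integrable (F x) ν) (hG : Integrable G ν)
    (hrem : ∀ ε > 0, ∀ᶠ x in 𝓝 x₀, ∀ a, |F x a - F x₀ a - ⟪G a, x - x₀⟫| ≤ ε * ‖x - x₀‖) :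
    HasGradientAt (fun x ↦ ∫ a, F x a ∂ν) (∫ a, G a ∂ν) x₀ := by
  rw [hasGradientAt_iff_isLittleO, Asymptotics.isLittleO_iff]
  intro c hc
  filter_upwards [hF, hrem (c / (ν.real univ + 1)) (by positivity)] with x hFx hx
  rw [real_inner_comm, ← integral_inner hG, ← integral_sub hFx hF.self_of_nhds,
    ← integral_sub (f := fun a ↦ F x a - F x₀ a) (hFx.sub hF.self_of_nhds) (hG.const_inner _)]
  calc ‖∫ a, F x a - F x₀ a - ⟪x - x₀, G a⟫ ∂ν‖
      ≤ c / (ν.real univ + 1) * ‖x - x₀‖ * ν.real univ :=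
        norm_integral_le_of_norm_le_const (.of_forall fun a ↦ by
          simpa [real_inner_comm] using hx a)
    _ ≤ c * ‖x - x₀‖ := by
        rw [div_mul_eq_mul_div, div_mul_eq_mul_div, div_le_iff₀ (by positivity)]
        nlinarith [norm_nonneg (x - x₀), measureReal_nonneg (μ := ν) (s := univ)]

variable {g : H → ℝ} {g' : H}

lemma HasGradientAt.const_mul {x : H} (hg : HasGradientAt g g' x) (c : ℝ) :
    HasGradientAt (fun y ↦ c * g y) (c • g') x := by
  rw [hasGradientAt_iff_hasFDerivAt, map_smul]
  exact hg.hasFDerivAt.const_mul c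

lemma HasGradientAt.comp_smul_sub (hg : HasGradientAt g g' 0) (c : ℝ) (a : H) :
    HasGradientAt (fun x ↦ g (c • (x - a))) (c • g') a := by
  have hg' : HasFDerivAt g (InnerProductSpace.toDual ℝ H g') (c • (a - a)) := by
    simpa using hg.hasFDerivAt
  rw [hasGradientAt_iff_hasFDerivAt]
  refine (hg'.comp a (((hasFDerivAt_id a).sub_const a).const_smul c)).congr_fderiv ?_
  ext x
  simp

end Gradient

lemma setIntegral_closedBall_zero_add {E : Type*} [NormedAddCommGroup E] [MeasurableSpace E]
    [BorelSpace E] (μ : Measure E) [μ.IsAddLeftInvariant] (φ : E → ℝ) (x : E) (R : ℝ) :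
    ∫ v in closedBall (0 : E) R, φ (x + v) ∂μ = ∫ y in closedBall x R, φ y ∂μ := by
  rw [← (measurePreserving_add_left μ x).setIntegral_preimage_emb
    (measurableEmbedding_addLeft x) φ (closedBall x R)]
  congr
  ext v
  simp [dist_eq_norm]

section BallSmoothing

variable {E : Type*} [NormedAddCommGroup E] [InnerProductSpace ℝ E] [FiniteDimensional ℝ E]
  {φ : E → ℝ}

lemma eventually_abs_intervalIntegral_ballRadius_sub_le (hφ : Continuous φ) (n : ℕ) {ε : ℝ}
    (hε : 0 < ε) : ∀ᶠ η in 𝓝 (0 : E), ∀ u : sphere (0 : E) 1,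
      |(∫ r in (0 : ℝ)..ballRadius η (u : E), r ^ n * φ (r • (u : E)))
        - (∫ r in (0 : ℝ)..1, r ^ n * φ (r • (u : E))) - φ u * ⟪(u : E), η⟫| ≤ ε * ‖η‖ := by
  obtain ⟨M, hM⟩ := (isCompact_sphere (0 : E) 1).exists_bound_of_continuousOn hφ.continuousOn
  have huniform := Continuous.tendstoUniformly
    (fun r (u : sphere (0 : E) 1) ↦ r ^ n * φ (r • (u : E))) (by fun_prop) 1
  obtain ⟨δ, hδ, hψ⟩ := Metric.eventually_nhds_iff.1
    (Metric.tendstoUniformly_iff.1 huniform (ε / 4) (by positivity))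
  filter_upwards [ball_mem_nhds (0 : E)
    (show 0 < min (1 / 2) (min (δ / 2) (ε / (2 * (|M| + 1)))) by positivity)] with η hη u
  obtain ⟨hη1, hηδ, hηε⟩ : ‖η‖ < 1 / 2 ∧ ‖η‖ < δ / 2 ∧ ‖η‖ < ε / (2 * (|M| + 1)) := by
    simpa only [lt_min_iff] using mem_ball_zero_iff.1 hη
  have hu : ‖(u : E)‖ = 1 := norm_eq_of_mem_sphere u
  have hη1' : ‖η‖ ≤ 1 := by linarith
  have hρ := abs_ballRadius_sub_one_le hη1' hu
  have hψu (r : ℝ) (hr : r ∈ uIcc 1 (ballRadius η u)) :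
      |r ^ n * φ (r • (u : E)) - 1 ^ n * φ ((1 : ℝ) • (u : E))| ≤ ε / 4 := by
    have hr1 : dist r 1 < δ := by
      rw [Real.dist_eq]
      linarith [abs_sub_left_of_mem_uIcc hr]
    rw [← Real.dist_eq, dist_comm]
    exact (hψ hr1 u).le
  have hradial := abs_intervalIntegral_sub_sub_mul_le (by fun_prop) hψu
  rw [one_pow, one_smul, one_mul] at hradial
  have hφu : |φ u| ≤ |M| := (hM u u.2).trans (le_abs_self M)
  calc _ = |((∫ r in (0 : ℝ)..ballRadius η u, r ^ n * φ (r • (u : E)))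
          - (∫ r in (0 : ℝ)..1, r ^ n * φ (r • (u : E))) - φ u * (ballRadius η u - 1))
          + φ u * (ballRadius η u - 1 - ⟪(u : E), η⟫)| := by ring_nf
    _ ≤ ε / 4 * |ballRadius η u - 1| + |M| * ‖η‖ ^ 2 := by
        grw [abs_add_le, hradial, abs_mul, hφu,
          abs_ballRadius_sub_one_sub_inner_le hη1' hu]
    _ ≤ ε * ‖η‖ := by
        rw [lt_div_iff₀ (by positivity)] at hηε
        nlinarith [norm_nonneg η, abs_nonneg M]

theorem hasGradientAt_setIntegral_closedBall_zero_add [MeasurableSpace E] [BorelSpace E]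
    [Nontrivial E] (μ : Measure E) [μ.IsAddHaarMeasure] (hφ : Continuous φ) :
    HasGradientAt (fun η ↦ ∫ v in closedBall (0 : E) 1, φ (η + v) ∂μ)
      (∫ u, φ u • (u : E) ∂μ.toSphere) 0 := by
  have hφint (η : E) : IntegrableOn φ (closedBall η 1) μ :=
    hφ.continuousOn.integrableOn_compact (isCompact_closedBall η 1)
  have hpolar : (fun η ↦ ∫ v in closedBall (0 : E) 1, φ (η + v) ∂μ) =ᶠ[𝓝 0] fun η ↦
      ∫ u : sphere (0 : E) 1, (∫ r in (0 : ℝ)..ballRadius η u,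
        r ^ (Module.finrank ℝ E - 1) * φ (r • (u : E))) ∂μ.toSphere := by
    filter_upwards [ball_mem_nhds (0 : E) one_pos] with η hη
    rw [setIntegral_closedBall_zero_add,
      setIntegral_closedBall_eq_integral_toSphere μ (mem_ball_zero_iff.1 hη) (hφint η)]
  refine (hasGradientAt_integral_of_uniform_remainder ?_ ?_ fun ε hε ↦ ?_).congr_of_eventuallyEq
    hpolar
  · filter_upwards [ball_mem_nhds (0 : E) one_pos] with η hη
    exact integrable_toSphere_intervalIntegral_ballRadius μ (mem_ball_zero_iff.1 hη) (hφint η)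
  · exact (by fun_prop : Continuous fun u : sphere (0 : E) 1 ↦ φ u • (u : E))
      |>.integrable_of_hasCompactSupport (HasCompactSupport.of_compactSpace _)
  · filter_upwards [eventually_abs_intervalIntegral_ballRadius_sub_le hφ _ hε] with η hη u
    simpa [real_inner_smul_left] using hη u

end BallSmoothing

section Normalization

variable {d : ℕ}

lemma integral_ballUniform (g : EuclideanSpace ℝ (Fin d) → ℝ) :
    ∫ v, g v ∂(ballUniform d) =
      (volume.real (closedBall (0 : EuclideanSpace ℝ (Fin d)) 1))⁻¹ *
        ∫ v in closedBall 0 1, g v := by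
  simp [ballUniform, integral_smul_measure, Measure.real]

lemma integral_sphereUniform [Nontrivial (EuclideanSpace ℝ (Fin d))] {F : Type*}
    [NormedAddCommGroup F] [NormedSpace ℝ F] (g : sphere (0 : EuclideanSpace ℝ (Fin d)) 1 → F) :
    ∫ u, g u ∂(sphereUniform d) =
      ((d : ℝ) * volume.real (closedBall (0 : EuclideanSpace ℝ (Fin d)) 1))⁻¹ •
        ∫ u, g u ∂(volume : Measure (EuclideanSpace ℝ (Fin d))).toSphere := by
  rw [sphereUniform, integral_smul_measure, Measure.toSphere_apply_univ,
    ← Measure.addHaar_closedBall_eq_addHaar_ball]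
  simp [Measure.real]

end Normalization

/-- Lemma 2 (after Flaxman et al.): for Lipschitz `f : ℝᵈ → ℝ` and `μ > 0`, the
ball-smoothing `f_μ(a) = E_{v ∼ U_b}[f(a + μ v)]` is differentiable everywhere with
gradient given by the sphere integral `∇f_μ(a) = (d/μ) ∫_{S^{d-1}} f(a + μ u) u dσ(u)`. -/
theorem ballSmoothing_hasGradient_sphere_integral
    (d : ℕ) (hd : 1 ≤ d) (f : EuclideanSpace ℝ (Fin d) → ℝ)
    (L₁ : NNReal) (hf : LipschitzWith L₁ f)
    (μ : ℝ) (hμ : 0 < μ)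
    (fμ : EuclideanSpace ℝ (Fin d) → ℝ)
    (hfμ : ∀ a, fμ a = ∫ v, f (a + μ • v) ∂(ballUniform d)) :
    ∀ a : EuclideanSpace ℝ (Fin d),
      HasGradientAt fμ
        (((d : ℝ) / μ) •
          ∫ u, f (a + μ • (u : EuclideanSpace ℝ (Fin d))) • (u : EuclideanSpace ℝ (Fin d))
            ∂(sphereUniform d)) a := by
  intro a
  have : Nontrivial (EuclideanSpace ℝ (Fin d)) :=
    Module.nontrivial_of_finrank_pos (R := ℝ) (by rw [finrank_euclideanSpace_fin]; omega)
  have hd0 : (d : ℝ) ≠ 0 := Nat.cast_ne_zero.2 (by omega)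
  rw [integral_sphereUniform, smul_smul]
  set V := volume.real (closedBall (0 : EuclideanSpace ℝ (Fin d)) 1)
  have hfμ_eq : fμ = fun x ↦ V⁻¹ * ∫ v in closedBall 0 1, f (a + μ • (μ⁻¹ • (x - a) + v)) := by
    funext x
    simp [hfμ, integral_ballUniform, V, smul_add, smul_inv_smul₀ hμ.ne', ← add_assoc]
  have hg := hasGradientAt_setIntegral_closedBall_zero_add volume
    (φ := fun y ↦ f (a + μ • y)) (by have := hf.continuous; fun_prop)
  rw [hfμ_eq]
  convert (hg.comp_smul_sub μ⁻¹ a).const_mul V⁻¹ using 1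
  rw [smul_smul]
  congr 1
  field_simp
end
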